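/- arXiv:1510.01148 — 2 statements merged into one kernel-verified Lean document; each statement's English description precedes it below -/
import Mathlib

section
/- Let F = [f_ij] be a K×K symmetric strictly diagonally dominant matrix with positive diagonal, and let μ = max_i (1/f_ii)Σ_{j≠i}|f_ij| < 1. Then for each j, the diagonal entry of the inverse satisfies (F⁻¹)_jj ≤ 1/(f_jj(1 − μ)). -/
/-! The column `x` of `F⁻¹` through `j` solves `F x = e_j`. In a row `i ≠ j` the diagonal term
balances the off-diagonal ones, so `|x i| ≤ μ · max |x|`; as `μ < 1`, the maximum of `|x|` is
therefore attained at `j` (or `x = 0`). Row `j` then reads `F j j · x j ≤ 1 + μ · F j j · |x j|`,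
which is the bound. -/

open Matrix Finset

def SDD {K : ℕ} (M : Matrix (Fin K) (Fin K) ℝ) : Prop :=
  ∀ i, ∑ j ∈ Finset.univ.erase i, |M i j| < |M i i|

namespace Matrix

variable {ι : Type*} [Fintype ι] [DecidableEq ι] {A : Matrix ι ι ℝ} {x : ι → ℝ} {μ : ℝ}

theorem mulVec_apply_eq_diag_add_sum_erase (A : Matrix ι ι ℝ) (x : ι → ℝ) (i : ι) :
    (A *ᵥ x) i = A i i * x i + ∑ k ∈ univ.erase i, A i k * x k := by
  rw [mulVec, dotProduct, ← add_sum_erase _ _ (mem_univ i)]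

theorem abs_sum_erase_mul_le {i : ι} {m : ℝ} (hx : ∀ k ∈ univ.erase i, |x k| ≤ m) :
    |∑ k ∈ univ.erase i, A i k * x k| ≤ (∑ k ∈ univ.erase i, |A i k|) * m :=
  calc |∑ k ∈ univ.erase i, A i k * x k|
      ≤ ∑ k ∈ univ.erase i, |A i k| * |x k| := by
        simpa only [abs_mul] using abs_sum_le_sum_abs (fun k => A i k * x k) (univ.erase i)
    _ ≤ ∑ k ∈ univ.erase i, |A i k| * m :=
        sum_le_sum fun k hk => mul_le_mul_of_nonneg_left (hx k hk) (abs_nonneg _)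
    _ = (∑ k ∈ univ.erase i, |A i k|) * m := by rw [sum_mul]

theorem abs_le_mul_of_mulVec_apply_eq_zero {i : ι} {m : ℝ} (hdiag : 0 < A i i)
    (hμ : ∑ k ∈ univ.erase i, |A i k| ≤ μ * A i i) (hzero : (A *ᵥ x) i = 0)
    (hm : ∀ k, |x k| ≤ m) : |x i| ≤ μ * m := by
  have hbalance : A i i * x i = -∑ k ∈ univ.erase i, A i k * x k := by
    rw [mulVec_apply_eq_diag_add_sum_erase] at hzero
    linarith
  have hm0 : 0 ≤ m := (abs_nonneg _).trans (hm i)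
  refine le_of_mul_le_mul_left ?_ hdiag
  calc A i i * |x i| = |∑ k ∈ univ.erase i, A i k * x k| := by
        rw [← abs_neg (∑ k ∈ univ.erase i, A i k * x k), ← hbalance, abs_mul, abs_of_pos hdiag]
    _ ≤ (∑ k ∈ univ.erase i, |A i k|) * m := abs_sum_erase_mul_le fun k _ => hm k
    _ ≤ μ * A i i * m := mul_le_mul_of_nonneg_right hμ hm0
    _ = A i i * (μ * m) := by ring

variable (hdiag : ∀ i, 0 < A i i) (hμ : ∀ i, ∑ k ∈ univ.erase i, |A i k| ≤ μ * A i i)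
  (hμ1 : μ < 1)
include hdiag hμ hμ1

theorem abs_le_abs_of_mulVec_apply_eq_zero_of_ne {j : ι} (hzero : ∀ i ≠ j, (A *ᵥ x) i = 0)
    (k : ι) : |x k| ≤ |x j| := by
  have : Nonempty ι := ⟨j⟩
  obtain ⟨i₀, hi₀⟩ := Finite.exists_max fun i => |x i|
  by_cases hij : i₀ = j
  · exact hij ▸ hi₀ k
  · have hle := abs_le_mul_of_mulVec_apply_eq_zero (hdiag i₀) (hμ i₀) (hzero i₀ hij) hi₀
    have hx0 : |x i₀| ≤ 0 := by nlinarith [abs_nonneg (x i₀)]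
    exact (hi₀ k).trans (hx0.trans (abs_nonneg _))

theorem le_one_div_of_mulVec_eq_single {j : ι} (hx : A *ᵥ x = Pi.single j 1) :
    x j ≤ 1 / (A j j * (1 - μ)) := by
  have hden : 0 < A j j * (1 - μ) := mul_pos (hdiag j) (by linarith)
  have hmax : ∀ k, |x k| ≤ |x j| :=
    abs_le_abs_of_mulVec_apply_eq_zero_of_ne hdiag hμ hμ1 fun i hi => by simp [hx, hi]
  have hrow : A j j * x j + ∑ k ∈ univ.erase j, A j k * x k = 1 := by
    rw [← mulVec_apply_eq_diag_add_sum_erase, hx, Pi.single_eq_same]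
  have hoff : |∑ k ∈ univ.erase j, A j k * x k| ≤ μ * A j j * |x j| :=
    (abs_sum_erase_mul_le fun k _ => hmax k).trans (mul_le_mul_of_nonneg_right (hμ j)
      (abs_nonneg _))
  rcases le_or_gt (x j) 0 with hneg | hpos
  · exact hneg.trans (one_div_pos.mpr hden).le
  · rw [le_div_iff₀ hden]
    rw [abs_of_pos hpos] at hoff
    nlinarith [neg_abs_le (∑ k ∈ univ.erase j, A j k * x k)]

end Matrix

theorem stmt10_general {K : ℕ} (F : Matrix (Fin K) (Fin K) ℝ) (hdiag : ∀ i, 0 < F i i)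
    (μ : ℝ) (hμ : ∀ i, ∑ j ∈ Finset.univ.erase i, |F i j| ≤ μ * F i i)
    (hμ1 : μ < 1) :
    ∀ j, F⁻¹ j j ≤ 1 / (F j j * (1 - μ)) := by
  intro j
  by_cases hF : IsUnit F.det
  · have hcol : F *ᵥ (F⁻¹ *ᵥ Pi.single j 1) = Pi.single j 1 := by
      rw [mulVec_mulVec, mul_nonsing_inv F hF, one_mulVec]
    simpa [mulVec_single_one] using le_one_div_of_mulVec_eq_single hdiag hμ hμ1 hcol
  · rw [nonsing_inv_apply_not_isUnit F hF, Matrix.zero_apply]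
    exact (one_div_pos.mpr (mul_pos (hdiag j) (by linarith))).le

theorem stmt10 {K : ℕ} (F : Matrix (Fin K) (Fin K) ℝ) (hsym : F.IsSymm)
    (hsdd : SDD F) (hdiag : ∀ i, 0 < F i i)
    (μ : ℝ) (hμ : ∀ i, ∑ j ∈ Finset.univ.erase i, |F i j| ≤ μ * F i i)
    (hμ1 : μ < 1) :
    ∀ j, F⁻¹ j j ≤ 1 / (F j j * (1 - μ)) :=
  stmt10_general F hdiag μ hμ hμ1
end

section
/- Let S be a K×K symmetric positive semidefinite matrix with entries bounded in absolute value by ρ. Then there exists λ₀ > 0 (e.g., λ₀ = 2K²ρ + 1) such that for all λ ≥ λ₀, the matrix (S + λI)⁻¹ is strictly diagonally dominant, and consequently (S + λI)⁻¹𝟏 has all positive entries. -/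
open Matrix Finset

/-!
For `c > 0` the matrix `F = S + c • 1` is coercive, `c ‖x‖² ≤ x ⬝ F x`, which bounds every entry of
`F⁻¹` by `c⁻¹`. Rewriting `F F⁻¹ = 1` as `F⁻¹ = c⁻¹ (1 - S F⁻¹)` (the first terms of the Neumann
series) then gives `|F⁻¹ - c⁻¹ • 1| ≤ Kρ / c²` entrywise. Once `c > K²ρ`, the diagonal entries
(at least `c⁻¹ - Kρ / c²`) dominate the `K - 1` off-diagonal ones (at most `Kρ / c²` each), and a
strictly diagonally dominant matrix with positive diagonal has positive row sums.
-/

namespace Matrix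

variable {n : Type*}

theorem PosSemidef.posDef_add_smul_one [DecidableEq n] {S : Matrix n n ℝ} (hS : S.PosSemidef)
    {c : ℝ} (hc : 0 < c) : (S + c • 1).PosDef :=
  PosDef.posSemidef_add hS (PosDef.one.smul hc)

variable [Fintype n]

theorem abs_mul_apply_le {A B : Matrix n n ℝ} {a b : ℝ} (hA : ∀ i j, |A i j| ≤ a)
    (hB : ∀ i j, |B i j| ≤ b) (i j : n) : |(A * B) i j| ≤ Fintype.card n * (a * b) := by
  calc |(A * B) i j| ≤ ∑ k, |A i k * B k j| := by rw [mul_apply]; exact abs_sum_le_sum_abs _ _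
    _ ≤ ∑ _k : n, a * b := by
        gcongr with k
        rw [abs_mul]
        exact mul_le_mul (hA i k) (hB k j) (abs_nonneg _) ((abs_nonneg _).trans (hA i k))
    _ = Fintype.card n * (a * b) := by rw [sum_const, card_univ, nsmul_eq_mul]

variable [DecidableEq n]

theorem PosSemidef.mul_dotProduct_self_le_add_smul_one {S : Matrix n n ℝ} (hS : S.PosSemidef)
    (c : ℝ) (x : n → ℝ) : c * (x ⬝ᵥ x) ≤ x ⬝ᵥ (S + c • 1) *ᵥ x := by
  have := hS.dotProduct_mulVec_nonneg x
  simp only [star_trivial] at this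
  simp only [add_mulVec, smul_mulVec, one_mulVec, dotProduct_add, dotProduct_smul, smul_eq_mul]
  linarith

/-- The column `y = F⁻¹ eⱼ` satisfies `c ‖y‖² ≤ y ⬝ F y = yⱼ`, which bounds first `yⱼ` and then
every `yᵢ` by `c⁻¹`. -/
theorem abs_inv_apply_le_of_coercive {F : Matrix n n ℝ} (hF : IsUnit F.det) {c : ℝ} (hc : 0 < c)
    (hcoer : ∀ x, c * (x ⬝ᵥ x) ≤ x ⬝ᵥ F *ᵥ x) (i j : n) : |F⁻¹ i j| ≤ c⁻¹ := by
  set y := F⁻¹ *ᵥ Pi.single j 1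
  have hy : ∀ k, y k = F⁻¹ k j := fun k => by simp [y, mulVec_single]
  have hFy : y ⬝ᵥ F *ᵥ y = y j := by
    rw [mulVec_mulVec, mul_nonsing_inv F hF, one_mulVec, dotProduct_single, mul_one]
  have hsq : ∀ k, y k ^ 2 ≤ y ⬝ᵥ y := fun k => by
    simpa [dotProduct, sq] using
      Finset.single_le_sum (f := fun l => y l * y l) (fun l _ => mul_self_nonneg _) (mem_univ k)
  have hcy : ∀ k, c * y k ^ 2 ≤ y j := fun k =>
    (mul_le_mul_of_nonneg_left (hsq k) hc.le).trans (hFy ▸ hcoer y)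
  have hyj : y j ≤ c⁻¹ := by
    by_contra! h
    have hpos : 0 < c * y j - 1 := by
      have := mul_lt_mul_of_pos_left h hc
      rwa [mul_inv_cancel₀ hc.ne', ← sub_pos] at this
    nlinarith [hcy j]
  rw [← hy]
  refine abs_le_of_sq_le_sq (le_of_mul_le_mul_left ?_ hc) (inv_nonneg.2 hc.le)
  calc c * y i ^ 2 ≤ c⁻¹ := (hcy i).trans hyj
    _ = c * c⁻¹ ^ 2 := by field_simp

theorem inv_add_smul_one_eq {S : Matrix n n ℝ} {c : ℝ} (hc : c ≠ 0) (h : IsUnit (S + c • 1).det) :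
    (S + c • 1)⁻¹ = c⁻¹ • (1 - S * (S + c • 1)⁻¹) := by
  have := mul_nonsing_inv _ h
  rw [add_mul, smul_mul, one_mul] at this
  calc (S + c • 1)⁻¹ = c⁻¹ • (c • (S + c • 1)⁻¹) := by rw [smul_smul, inv_mul_cancel₀ hc, one_smul]
    _ = c⁻¹ • (1 - S * (S + c • 1)⁻¹) := by
        congr 1; rw [eq_sub_iff_add_eq, add_comm, this]

theorem PosSemidef.abs_inv_add_smul_one_sub_le {S : Matrix n n ℝ} (hS : S.PosSemidef) {ρ : ℝ}
    (hρ : ∀ i j, |S i j| ≤ ρ) {c : ℝ} (hc : 0 < c) (i j : n) :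
    |(S + c • 1)⁻¹ i j - c⁻¹ * (1 : Matrix n n ℝ) i j| ≤ Fintype.card n * ρ / c ^ 2 := by
  have hdet : IsUnit (S + c • 1).det :=
    (isUnit_iff_isUnit_det _).1 (hS.posDef_add_smul_one hc).isUnit
  have hinv := abs_inv_apply_le_of_coercive hdet hc (hS.mul_dotProduct_self_le_add_smul_one c)
  have hSG := abs_mul_apply_le hρ hinv i j
  have hexp : (S + c • 1)⁻¹ i j - c⁻¹ * (1 : Matrix n n ℝ) i j
      = -(c⁻¹ * (S * (S + c • 1)⁻¹) i j) := by
    conv_lhs => rw [inv_add_smul_one_eq hc.ne' hdet]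
    simp only [smul_apply, sub_apply, smul_eq_mul]
    ring
  rw [hexp, abs_neg, abs_mul, abs_of_pos (inv_pos.2 hc)]
  calc c⁻¹ * |(S * (S + c • 1)⁻¹) i j| ≤ c⁻¹ * (Fintype.card n * (ρ * c⁻¹)) := by gcongr
    _ = Fintype.card n * ρ / c ^ 2 := by field_simp

end Matrix

theorem SDD.of_abs_apply_le {K : ℕ} {M : Matrix (Fin K) (Fin K) ℝ} {a b : ℝ}
    (hoff : ∀ i j, i ≠ j → |M i j| ≤ b) (hdiag : ∀ i, a ≤ M i i) (hab : ((K : ℝ) - 1) * b < a) :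
    SDD M := by
  intro i
  have hcard : ((univ.erase i).card : ℝ) = (K : ℝ) - 1 := by
    rw [card_erase_of_mem (mem_univ i), card_univ, Fintype.card_fin,
      Nat.cast_pred (Fin.pos i)]
  calc ∑ j ∈ univ.erase i, |M i j| ≤ ∑ _j ∈ univ.erase i, b :=
        sum_le_sum fun j hj => hoff i j (ne_of_mem_erase hj).symm
    _ = ((K : ℝ) - 1) * b := by rw [sum_const, nsmul_eq_mul, hcard]
    _ < a := hab
    _ ≤ |M i i| := (hdiag i).trans (le_abs_self _)

theorem SDD.mulVec_one_pos {K : ℕ} {M : Matrix (Fin K) (Fin K) ℝ} (hM : SDD M)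
    (hdiag : ∀ i, 0 < M i i) (i : Fin K) : 0 < (M *ᵥ fun _ => 1) i := by
  have hrow : (M *ᵥ fun _ => 1) i = M i i + ∑ j ∈ univ.erase i, M i j := by
    simp only [mulVec, dotProduct, mul_one, add_sum_erase _ _ (mem_univ i)]
  have hneg : -∑ j ∈ univ.erase i, |M i j| ≤ ∑ j ∈ univ.erase i, M i j := by
    rw [← sum_neg_distrib]
    exact sum_le_sum fun j _ => neg_abs_le _
  have := hM i
  rw [abs_of_pos (hdiag i)] at this
  linarith

theorem stmt14 {K : ℕ} (S : Matrix (Fin K) (Fin K) ℝ) (hpsd : S.PosSemidef)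
    (ρ : ℝ) (hρ : ∀ i j, |S i j| ≤ ρ) :
    ∃ lam₀ : ℝ, 0 < lam₀ ∧ ∀ lam : ℝ, lam₀ ≤ lam →
      SDD (S + lam • (1 : Matrix (Fin K) (Fin K) ℝ))⁻¹ ∧
      ∀ i, 0 < ((S + lam • (1 : Matrix (Fin K) (Fin K) ℝ))⁻¹ *ᵥ (fun _ => (1 : ℝ))) i := by
  refine ⟨K ^ 2 * |ρ| + 1, by positivity, fun lam hlam => ?_⟩
  have hlam : 0 < lam := by linarith [show 0 ≤ (K : ℝ) ^ 2 * |ρ| by positivity]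
  have hK2ρ : (K : ℝ) ^ 2 * ρ < lam := by
    nlinarith [mul_le_mul_of_nonneg_left (le_abs_self ρ) (sq_nonneg (K : ℝ))]
  have hnear := hpsd.abs_inv_add_smul_one_sub_le hρ hlam
  simp only [Fintype.card_fin] at hnear
  have hsdd : SDD (S + lam • (1 : Matrix (Fin K) (Fin K) ℝ))⁻¹ := by
    refine SDD.of_abs_apply_le (a := lam⁻¹ - K * ρ / lam ^ 2) (b := K * ρ / lam ^ 2)
      (fun i j hij => by simpa [one_apply_ne hij] using hnear i j)
      (fun i => by linarith [(abs_le.1 (by simpa using hnear i i)).1]) ?_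
    calc ((K : ℝ) - 1) * (K * ρ / lam ^ 2) = K ^ 2 * ρ / lam ^ 2 - K * ρ / lam ^ 2 := by ring
      _ < lam / lam ^ 2 - K * ρ / lam ^ 2 := by gcongr
      _ = lam⁻¹ - K * ρ / lam ^ 2 := by field_simp
  exact ⟨hsdd, hsdd.mulVec_one_pos fun _ => (hpsd.posDef_add_smul_one hlam).inv.diag_pos⟩
end
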